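/- The minimum defect over all Mondrian partitions of the 5×5 square equals 4; that is, d(5) = d_3(5) = 4, and moreover every Mondrian partition of the 5×5 square into k ≥ 4 rectangles has defect strictly greater than 4. -/

import Mathlib

/-- An axis-aligned rectangle with integer coordinates placed on the grid:
lower-left corner `(x, y)`, width `w`, and height `h`. -/
structure Rect where
  x : ℕ
  y : ℕ
  w : ℕ
  h : ℕ
deriving DecidableEq

/-- The area of a rectangle. -/
def Rect.area (r : Rect) : ℕ := r.w * r.h

/-- Two rectangles are congruent if they have the same dimensions,
possibly after a ninety-degree rotation. -/
def Rect.Congruent (r s : Rect) : Prop :=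
  (r.w = s.w ∧ r.h = s.h) ∨ (r.w = s.h ∧ r.h = s.w)

/-- The rectangle `r` covers the unit grid cell `[i, i+1) × [j, j+1)`. -/
def Rect.Covers (r : Rect) (i j : ℕ) : Prop :=
  r.x ≤ i ∧ i < r.x + r.w ∧ r.y ≤ j ∧ j < r.y + r.h

/-- A Mondrian partition of the `n × n` square: a finite collection of
pairwise non-congruent rectangles with positive integer side lengths that
tile the square (every cell of the square is covered by exactly one
rectangle, and rectangles lie inside the square). -/
structure Mondrian (n : ℕ) where
  rects : Finset Rect
  pos : ∀ r ∈ rects, 0 < r.w ∧ 0 < r.h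
  inside : ∀ r ∈ rects, r.x + r.w ≤ n ∧ r.y + r.h ≤ n
  cover : ∀ i j : ℕ, i < n → j < n → ∃! r : Rect, r ∈ rects ∧ r.Covers i j
  noncong : ∀ r ∈ rects, ∀ s ∈ rects, r ≠ s → ¬ r.Congruent s

/-- The defect of a Mondrian partition: the difference between the largest
and the smallest rectangle areas. -/
def Mondrian.defect {n : ℕ} (P : Mondrian n) : ℕ :=
  P.rects.sup fun r => P.rects.sup fun s => r.area - s.area

/-- A Mondrian partition is perfect if all its rectangles have the same area. -/
def Mondrian.IsPerfect {n : ℕ} (P : Mondrian n) : Prop :=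
  ∀ r ∈ P.rects, ∀ s ∈ P.rects, r.area = s.area

/-- `mondrianDk n k` is the minimum defect over all Mondrian partitions of the
`n × n` square using exactly `k` rectangles. -/
noncomputable def mondrianDk (n k : ℕ) : ℕ :=
  sInf {d | ∃ P : Mondrian n, P.rects.card = k ∧ P.defect = d}

/-- `mondrianD n` is the minimum defect over all Mondrian partitions of the
`n × n` square (into at least two rectangles). -/
noncomputable def mondrianD (n : ℕ) : ℕ :=
  sInf {d | ∃ P : Mondrian n, 2 ≤ P.rects.card ∧ P.defect = d}

/-!
A Mondrian partition of the `n × n` square uses each shape `a × b` with `1 ≤ a ≤ b ≤ n` at most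
once, and its areas add up to `n²`. If its defect is at most `d`, all areas lie in the window
`[m, m + d]` above the smallest area `m`. For `n = 5` a finite enumeration of the sets of shapes
with areas in such a window and total area `25` shows that none has two members when `d = 3` and
none has four members when `d = 4`; the partition into `2 × 5`, `3 × 3` and `3 × 2` has defect `4`.
-/

instance (r : Rect) (i j : ℕ) : Decidable (r.Covers i j) :=
  inferInstanceAs (Decidable (_ ∧ _ ∧ _ ∧ _))

instance (r s : Rect) : Decidable (r.Congruent s) :=
  inferInstanceAs (Decidable (_ ∨ _))

namespace Rect

def cells (r : Rect) : Finset (ℕ × ℕ) :=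
  Finset.Ico r.x (r.x + r.w) ×ˢ Finset.Ico r.y (r.y + r.h)

lemma mem_cells {r : Rect} {p : ℕ × ℕ} : p ∈ r.cells ↔ r.Covers p.1 p.2 := by
  simp [cells, Covers, and_assoc]

lemma card_cells (r : Rect) : r.cells.card = r.area := by
  simp [cells, area]

/-- The dimensions of `r` up to rotation, shorter side first. -/
def shape (r : Rect) : ℕ × ℕ := (min r.w r.h, max r.w r.h)

lemma shape_fst_mul_snd (r : Rect) : r.shape.1 * r.shape.2 = r.area :=
  min_mul_max r.w r.h

lemma shape_eq_iff_congruent {r s : Rect} : r.shape = s.shape ↔ r.Congruent s := by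
  simp only [shape, Prod.mk.injEq, Congruent]
  omega

end Rect

def shapes (n : ℕ) : Finset (ℕ × ℕ) :=
  (Finset.Icc 1 n ×ˢ Finset.Icc 1 n).filter fun p => p.1 ≤ p.2

def shapesWithAreaIn (n lo hi : ℕ) : Finset (ℕ × ℕ) :=
  (shapes n).filter fun p => lo ≤ p.1 * p.2 ∧ p.1 * p.2 ≤ hi

namespace Mondrian

variable {n : ℕ} (P : Mondrian n)

lemma lt_of_covers {r : Rect} (hr : r ∈ P.rects) {i j : ℕ} (h : r.Covers i j) :
    i < n ∧ j < n := by
  have := P.inside r hr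
  obtain ⟨_, _, _, _⟩ := h
  omega

lemma eq_of_covers {r s : Rect} (hr : r ∈ P.rects) (hs : s ∈ P.rects) {i j : ℕ}
    (hri : r.Covers i j) (hsi : s.Covers i j) : r = s := by
  obtain ⟨hi, hj⟩ := P.lt_of_covers hr hri
  exact (P.cover i j hi hj).unique ⟨hr, hri⟩ ⟨hs, hsi⟩

lemma biUnion_cells :
    P.rects.biUnion Rect.cells = Finset.range n ×ˢ Finset.range n := by
  ext ⟨i, j⟩
  simp only [Finset.mem_biUnion, Rect.mem_cells, Finset.mem_product, Finset.mem_range]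
  constructor
  · rintro ⟨r, hr, hc⟩
    exact P.lt_of_covers hr hc
  · rintro ⟨hi, hj⟩
    obtain ⟨r, ⟨hr, hc⟩, -⟩ := P.cover i j hi hj
    exact ⟨r, hr, hc⟩

lemma pairwiseDisjoint_cells : (P.rects : Set Rect).PairwiseDisjoint Rect.cells := by
  intro r hr s hs hne
  refine Finset.disjoint_left.mpr fun p hpr hps => hne ?_
  exact P.eq_of_covers hr hs (Rect.mem_cells.mp hpr) (Rect.mem_cells.mp hps)

lemma sum_area : ∑ r ∈ P.rects, r.area = n * n := by
  have h := congrArg Finset.card P.biUnion_cells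
  rwa [Finset.card_biUnion P.pairwiseDisjoint_cells, Finset.card_product, Finset.card_range,
    Finset.sum_congr rfl fun r _ => r.card_cells] at h

lemma rects_nonempty (hn : 0 < n) : P.rects.Nonempty := by
  obtain ⟨r, ⟨hr, -⟩, -⟩ := P.cover 0 0 hn hn
  exact ⟨r, hr⟩

lemma area_sub_area_le_defect {r s : Rect} (hr : r ∈ P.rects) (hs : s ∈ P.rects) :
    r.area - s.area ≤ P.defect :=
  (Finset.le_sup (f := fun t => r.area - t.area) hs).trans
    (Finset.le_sup (f := fun r => P.rects.sup fun s => r.area - s.area) hr)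

lemma shape_injOn : Set.InjOn Rect.shape P.rects := fun r hr s hs h => by
  by_contra hne
  exact P.noncong r hr s hs hne (Rect.shape_eq_iff_congruent.mp h)

lemma shape_mem_shapes {r : Rect} (hr : r ∈ P.rects) : r.shape ∈ shapes n := by
  have := P.pos r hr
  have := P.inside r hr
  simp only [shapes, Rect.shape, Finset.mem_filter, Finset.mem_product, Finset.mem_Icc]
  omega

theorem card_le_of_defect_le (hn : 0 < n) {d c : ℕ} (hd : P.defect ≤ d)
    (hshapes : ∀ lo ≤ n * n, ∀ S ∈ (shapesWithAreaIn n lo (lo + d)).powerset,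
      ∑ p ∈ S, p.1 * p.2 = n * n → S.card ≤ c) :
    P.rects.card ≤ c := by
  obtain ⟨r₀, hr₀, hmin⟩ := P.rects.exists_min_image Rect.area (P.rects_nonempty hn)
  have hr₀_le : r₀.area ≤ n * n := P.sum_area ▸ Finset.single_le_sum (by simp) hr₀
  have hsub : P.rects.image Rect.shape ⊆ shapesWithAreaIn n r₀.area (r₀.area + d) := by
    simp only [Finset.image_subset_iff, shapesWithAreaIn, Finset.mem_filter,
      Rect.shape_fst_mul_snd]
    intro r hr
    have := P.area_sub_area_le_defect hr hr₀
    exact ⟨P.shape_mem_shapes hr, hmin r hr, by omega⟩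
  have hsum : ∑ p ∈ P.rects.image Rect.shape, p.1 * p.2 = n * n := by
    rw [Finset.sum_image fun r hr s hs => P.shape_injOn hr hs, ← P.sum_area]
    exact Finset.sum_congr rfl fun r _ => r.shape_fst_mul_snd
  rw [← Finset.card_image_of_injOn P.shape_injOn]
  exact hshapes _ hr₀_le _ (Finset.mem_powerset.mpr hsub) hsum

end Mondrian

lemma shapes_five_spread_three_card_le_one :
    ∀ lo ≤ 5 * 5, ∀ S ∈ (shapesWithAreaIn 5 lo (lo + 3)).powerset,
      ∑ p ∈ S, p.1 * p.2 = 5 * 5 → S.card ≤ 1 := by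
  decide

lemma shapes_five_spread_four_card_le_three :
    ∀ lo ≤ 5 * 5, ∀ S ∈ (shapesWithAreaIn 5 lo (lo + 4)).powerset,
      ∑ p ∈ S, p.1 * p.2 = 5 * 5 → S.card ≤ 3 := by
  decide

def rectsFiveThree : Finset Rect := {⟨0, 0, 2, 5⟩, ⟨2, 0, 3, 3⟩, ⟨2, 3, 3, 2⟩}

def mondrianFiveThree : Mondrian 5 where
  rects := rectsFiveThree
  pos := by decide
  inside := by decide
  cover i j hi hj := by
    have h : ∀ i j : Fin 5, ∃ r ∈ rectsFiveThree,
        r.Covers i j ∧ ∀ s ∈ rectsFiveThree, s.Covers i j → s = r := by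
      decide
    obtain ⟨r, hr, hc, hu⟩ := h ⟨i, hi⟩ ⟨j, hj⟩
    exact ⟨r, ⟨hr, hc⟩, fun s ⟨hs, hcs⟩ => hu s hs hcs⟩
  noncong := by decide

lemma mondrianFiveThree_card : mondrianFiveThree.rects.card = 3 := by decide

lemma mondrianFiveThree_defect : mondrianFiveThree.defect = 4 := by decide

lemma four_le_defect_of_two_le_card (P : Mondrian 5) (hP : 2 ≤ P.rects.card) : 4 ≤ P.defect := by
  by_contra! h
  have := P.card_le_of_defect_le (by norm_num) (Nat.le_of_lt_succ h)
    shapes_five_spread_three_card_le_one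
  omega

/-- The minimum defect over all Mondrian partitions of the `5 × 5` square is `4`:
`d(5) = d_3(5) = 4`, and every Mondrian partition of the `5 × 5` square into
`k ≥ 4` rectangles has defect strictly greater than `4`. -/
theorem mondrian_five : mondrianD 5 = 4 ∧ mondrianDk 5 3 = 4 ∧
    ∀ P : Mondrian 5, 4 ≤ P.rects.card → 4 < P.defect := by
  refine ⟨IsLeast.csInf_eq ⟨?_, ?_⟩, IsLeast.csInf_eq ⟨?_, ?_⟩, fun P hP => ?_⟩
  · exact ⟨mondrianFiveThree, by rw [mondrianFiveThree_card]; omega, mondrianFiveThree_defect⟩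
  · rintro d ⟨P, hP, rfl⟩
    exact four_le_defect_of_two_le_card P hP
  · exact ⟨mondrianFiveThree, mondrianFiveThree_card, mondrianFiveThree_defect⟩
  · rintro d ⟨P, hP, rfl⟩
    exact four_le_defect_of_two_le_card P (by omega)
  · by_contra! h
    have := P.card_le_of_defect_le (by norm_num) h shapes_five_spread_four_card_le_three
    omega
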